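/- Let X be a countable alphabet, p a probability distribution on X, and X_1,...,X_n i.i.d. samples from p with empirical estimator p̂_u = #{i ≤ n : X_i = u}/n. Let m be a positive even integer, d = m/2, and let c_{k,m,n} (1 ≤ k ≤ d) be real coefficients satisfying the binomial central-moment identity. Then for every a > 0, P( sup_{u∈X} |p_u − p̂_u| ≥ a ) ≤ (n a)^{−m} Σ_{u∈X} Σ_{k=1}^{d} c_{k,m,n} (p_u(1−p_u))^k. -/

import Mathlib

/-! For a fixed symbol `u`, the count `N_u = n p̂_u` is a sum of `n` independent Bernoulli(`p_u`)
indicators, hence binomial; the `m`-th moment Markov bound then gives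
`P(|p_u - p̂_u| > t) ≤ E[(N_u - n p_u)^m] / (n t)^m`, and the moment identity rewrites the
numerator as `∑_k c_k (p_u(1-p_u))^k`. A union bound over the countably many symbols controls the
supremum. The series converges because, the sum starting at `k = 1`, its `u`-th term is at most
`(∑_k |c_k|) p_u`. The supremum need not be attained, so this only bounds the event
`t < sup_u |p_u - p̂_u|`; letting `t ↑ a` gives the claim. -/

open MeasureTheory ProbabilityTheory Finset

/-- The empirical (maximum likelihood) estimator `p̂_u = #{i ≤ n : X_i = u} / n`. -/
noncomputable def emp {𝒳 : Type*} [DecidableEq 𝒳] {Ω : Type*} {n : ℕ}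
    (X : Fin n → Ω → 𝒳) (ω : Ω) (u : 𝒳) : ℝ :=
  ((Finset.univ.filter (fun i => X i ω = u)).card : ℝ) / n

/-- The coefficients `c k` (for `1 ≤ k ≤ d`) satisfy the binomial central-moment identity:
for every `θ ∈ [0,1]` and `Y ~ Bin(n, θ)`,
`E[(Y - nθ)^m] = ∑_{k=1}^d c k (θ(1-θ))^k`. -/
def MomentIdentity (n m d : ℕ) (c : ℕ → ℝ) : Prop :=
  ∀ θ : ℝ, θ ∈ Set.Icc (0:ℝ) 1 →
    ∑ y ∈ Finset.range (n+1),
        (n.choose y : ℝ) * θ^y * (1-θ)^(n-y) * ((y:ℝ) - n*θ)^m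
      = ∑ k ∈ Finset.Icc 1 d, c k * (θ*(1-θ))^k

section IndependentEvents

variable {Ω ι : Type*} [Fintype ι] {A : ι → Set Ω}

open scoped Classical in
lemma setOf_filter_mem_eq_iInter (s : Finset ι) :
    {ω | ({i | ω ∈ A i} : Finset ι) = s} = ⋂ i, if i ∈ s then A i else (A i)ᶜ := by
  ext ω
  simp only [Set.mem_ofPred_eq, Finset.ext_iff, mem_filter, mem_univ, true_and,
    Set.mem_iInter]
  refine forall_congr' fun i => ?_
  split_ifs with hi <;> simp [hi]

variable [MeasurableSpace Ω] {μ : Measure Ω} {q : ℝ}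

open scoped Classical in
lemma measure_setOf_filter_mem_eq (hA : iIndepSet A μ) (hAm : ∀ i, MeasurableSet (A i))
    (hq0 : 0 ≤ q) (hq1 : q ≤ 1) (hμA : ∀ i, μ (A i) = ENNReal.ofReal q) (s : Finset ι) :
    μ {ω | ({i | ω ∈ A i} : Finset ι) = s} =
      ENNReal.ofReal (q ^ #s * (1 - q) ^ (Fintype.card ι - #s)) := by
  have := hA.isProbabilityMeasure
  have hμAc (i : ι) : μ (A i)ᶜ = ENNReal.ofReal (1 - q) := by
    rw [prob_compl_eq_one_sub (hAm i), hμA, ENNReal.ofReal_sub _ hq0, ENNReal.ofReal_one]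
  rw [setOf_filter_mem_eq_iInter, ((iIndepSet_iff_iIndep A μ).1 hA).meas_iInter fun i => ?_]
  · have hcompl : #{i | i ∉ s} = Fintype.card ι - #s := by rw [filter_not, card_sdiff]; simp
    simp only [apply_ite μ, hμA, hμAc, prod_ite, prod_const, filter_univ_mem, hcompl]
    rw [ENNReal.ofReal_mul (by positivity), ENNReal.ofReal_pow hq0,
      ENNReal.ofReal_pow (sub_nonneg.2 hq1)]
  · have hAi : MeasurableSet[.generateFrom {A i}] (A i) := .basic _ rfl
    split_ifs
    exacts [hAi, hAi.compl]

open scoped Classical in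
lemma measure_card_filter_mem_eq (hA : iIndepSet A μ) (hAm : ∀ i, MeasurableSet (A i))
    (hq0 : 0 ≤ q) (hq1 : q ≤ 1) (hμA : ∀ i, μ (A i) = ENNReal.ofReal q) (k : ℕ) :
    μ {ω | #{i | ω ∈ A i} = k} = ENNReal.ofReal
      ((Fintype.card ι).choose k * q ^ k * (1 - q) ^ (Fintype.card ι - k)) := by
  have hunion : {ω | #{i | ω ∈ A i} = k} =
      ⋃ s ∈ powersetCard k univ, {ω | ({i | ω ∈ A i} : Finset ι) = s} := by
    ext ω; simp
  have hmeas (s : Finset ι) : MeasurableSet {ω | ({i | ω ∈ A i} : Finset ι) = s} := by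
    rw [setOf_filter_mem_eq_iInter]
    exact .iInter fun i => by split_ifs; exacts [hAm i, (hAm i).compl]
  rw [hunion, measure_biUnion_finset (fun s _ t _ hst => ?_) fun s _ => hmeas s]
  · rw [sum_congr rfl fun s hs => by
      rw [measure_setOf_filter_mem_eq hA hAm hq0 hq1 hμA, (mem_powersetCard.1 hs).2]]
    rw [sum_const, card_powersetCard, card_univ, nsmul_eq_mul, ← ENNReal.ofReal_natCast,
      ← ENNReal.ofReal_mul (by positivity), mul_assoc]
  · exact Set.disjoint_left.2 fun ω hs ht => hst (hs.symm.trans ht)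

open scoped Classical in
lemma measure_lt_abs_card_filter_mem_sub_le (hA : iIndepSet A μ)
    (hAm : ∀ i, MeasurableSet (A i)) (hq0 : 0 ≤ q) (hq1 : q ≤ 1)
    (hμA : ∀ i, μ (A i) = ENNReal.ofReal q) {m : ℕ} (hm : Even m) {t : ℝ} (ht : 0 < t) :
    μ {ω | t < |(#{i | ω ∈ A i} : ℝ) - Fintype.card ι * q|} ≤
      ENNReal.ofReal ((∑ y ∈ range (Fintype.card ι + 1), (Fintype.card ι).choose y * q ^ y *
        (1 - q) ^ (Fintype.card ι - y) * ((y : ℝ) - Fintype.card ι * q) ^ m) / t ^ m) := by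
  set N := Fintype.card ι
  set w : ℕ → ℝ := fun y => N.choose y * q ^ y * (1 - q) ^ (N - y)
  have hw (y : ℕ) : 0 ≤ w y := by have := sub_nonneg.2 hq1; positivity
  have hterm (y : ℕ) : 0 ≤ w y * ((y : ℝ) - N * q) ^ m / t ^ m := by
    have := hw y; have := hm.pow_nonneg ((y : ℝ) - N * q); positivity
  set bad : Finset ℕ := {y ∈ range (N + 1) | t < |(y : ℝ) - N * q|}
  have hsub : {ω | t < |(#{i | ω ∈ A i} : ℝ) - N * q|} ⊆
      ⋃ y ∈ bad, {ω | #{i | ω ∈ A i} = y} := fun ω hω => by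
    have : #{i | ω ∈ A i} < N + 1 := Nat.lt_succ_of_le (card_le_univ _)
    simp_all [bad]
  calc μ _ ≤ ∑ y ∈ bad, μ {ω | #{i | ω ∈ A i} = y} :=
        (measure_mono hsub).trans (measure_biUnion_finset_le _ _)
    _ = ∑ y ∈ bad, ENNReal.ofReal (w y) :=
        sum_congr rfl fun y _ => measure_card_filter_mem_eq hA hAm hq0 hq1 hμA y
    _ ≤ ∑ y ∈ bad, ENNReal.ofReal (w y * ((y : ℝ) - N * q) ^ m / t ^ m) := by
        gcongr with y hy
        have hty : t ^ m ≤ ((y : ℝ) - N * q) ^ m := by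
          rw [← hm.pow_abs ((y : ℝ) - N * q)]
          exact pow_le_pow_left₀ ht.le (mem_filter.1 hy).2.le m
        rw [mul_div_assoc]
        exact le_mul_of_one_le_right (hw y) ((one_le_div (by positivity)).2 hty)
    _ ≤ ∑ y ∈ range (N + 1), ENNReal.ofReal (w y * ((y : ℝ) - N * q) ^ m / t ^ m) :=
        sum_le_sum_of_subset (filter_subset _ _)
    _ = _ := by rw [← ENNReal.ofReal_sum_of_nonneg fun y _ => hterm y, sum_div]

end IndependentEvents

lemma ProbabilityTheory.iIndepFun.iIndepSet_preimage {Ω ι : Type*} [MeasurableSpace Ω]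
    {μ : Measure Ω} {β : ι → Type*} [∀ i, MeasurableSpace (β i)] {X : ∀ i, Ω → β i}
    (hX : iIndepFun X μ) {s : ∀ i, Set (β i)} (hs : ∀ i, MeasurableSet (s i)) :
    iIndepSet (fun i => X i ⁻¹' s i) μ :=
  (iIndepSet_iff_iIndep _ μ).2 <|
    iIndep_of_iIndep_of_le ((iIndepFun_iff_iIndep _ _ _).1 hX) fun i =>
      MeasurableSpace.generateFrom_le <| by rintro _ rfl; exact ⟨s i, hs i, rfl⟩

lemma mul_abs_sub_emp_eq {𝒳 Ω : Type*} [DecidableEq 𝒳] {n : ℕ} (hn : n ≠ 0)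
    (X : Fin n → Ω → 𝒳) (ω : Ω) (u : 𝒳) (q : ℝ) :
    n * |q - emp X ω u| = |(#{i | X i ω = u} : ℝ) - n * q| := by
  have hn' : (0 : ℝ) < n := Nat.cast_pos.2 (Nat.pos_of_ne_zero hn)
  rw [abs_sub_comm _ (n * q), emp]
  nth_rewrite 1 [← abs_of_pos hn']
  rw [← abs_mul, mul_sub, mul_div_cancel₀ _ hn'.ne']

lemma measure_lt_abs_sub_emp_le {Ω 𝒳 : Type*} [MeasurableSpace Ω] {μ : Measure Ω}
    [DecidableEq 𝒳] [MeasurableSpace 𝒳] [MeasurableSingletonClass 𝒳] {n : ℕ}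
    {X : Fin n → Ω → 𝒳} (hmeas : ∀ i, Measurable (X i)) (hX : iIndepFun X μ) (hn : n ≠ 0)
    (u : 𝒳) {q : ℝ} (hq0 : 0 ≤ q) (hq1 : q ≤ 1)
    (hμX : ∀ i, μ {ω | X i ω = u} = ENNReal.ofReal q) {m : ℕ} (hm : Even m) {t : ℝ}
    (ht : 0 < t) :
    μ {ω | t < |q - emp X ω u|} ≤ ENNReal.ofReal ((∑ y ∈ range (n + 1),
      n.choose y * q ^ y * (1 - q) ^ (n - y) * ((y : ℝ) - n * q) ^ m) / (n * t) ^ m) := by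
  classical
  have hn' : (0 : ℝ) < n := Nat.cast_pos.2 (Nat.pos_of_ne_zero hn)
  have hset : {ω | t < |q - emp X ω u|} =
      {ω | n * t < |(#{i | ω ∈ X i ⁻¹' {u}} : ℝ) - Fintype.card (Fin n) * q|} := by
    ext ω
    simp only [Set.mem_ofPred_eq, Set.mem_preimage, Set.mem_singleton_iff, Fintype.card_fin,
      ← mul_abs_sub_emp_eq hn, mul_lt_mul_iff_right₀ hn']
  rw [hset]
  simpa using measure_lt_abs_card_filter_mem_sub_le
    (hX.iIndepSet_preimage fun _ => measurableSet_singleton u)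
    (fun i => hmeas i (measurableSet_singleton u)) hq0 hq1 hμX hm (by positivity)

lemma abs_sum_Icc_one_mul_pow_le (c : ℕ → ℝ) (d : ℕ) {x : ℝ} (hx0 : 0 ≤ x) (hx1 : x ≤ 1) :
    |∑ k ∈ Icc 1 d, c k * x ^ k| ≤ (∑ k ∈ Icc 1 d, |c k|) * x := by
  refine (abs_sum_le_sum_abs _ _).trans ?_
  rw [sum_mul]
  refine sum_le_sum fun k hk => ?_
  rw [abs_mul, abs_of_nonneg (pow_nonneg hx0 k)]
  gcongr
  exact pow_le_of_le_one hx0 hx1 (Nat.one_le_iff_ne_zero.1 (mem_Icc.1 hk).1)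

lemma summable_sum_Icc_one_mul_pow {𝒳 : Type*} {p : 𝒳 → ℝ} (hp0 : ∀ u, 0 ≤ p u)
    (hp1 : ∀ u, p u ≤ 1) (hp : Summable p) (c : ℕ → ℝ) (d : ℕ) :
    Summable fun u => ∑ k ∈ Icc 1 d, c k * (p u * (1 - p u)) ^ k := by
  refine (hp.mul_left (∑ k ∈ Icc 1 d, |c k|)).of_norm_bounded fun u => ?_
  have := hp0 u
  have := sub_nonneg.2 (hp1 u)
  refine (abs_sum_Icc_one_mul_pow_le c d (by positivity) (by nlinarith)).trans ?_
  gcongr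
  nlinarith

lemma MomentIdentity.sum_nonneg {n m d : ℕ} {c : ℕ → ℝ} (hc : MomentIdentity n m d c)
    (hm : Even m) {θ : ℝ} (hθ : θ ∈ Set.Icc 0 1) :
    0 ≤ ∑ k ∈ Icc 1 d, c k * (θ * (1 - θ)) ^ k := by
  have := hθ.1
  have := sub_nonneg.2 hθ.2
  rw [← hc θ hθ]
  exact Finset.sum_nonneg fun y _ => mul_nonneg (by positivity) (hm.pow_nonneg _)

lemma exists_lt_of_nonneg_lt_iSup {ι : Type*} {f : ι → ℝ} {a : ℝ} (ha : 0 ≤ a)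
    (h : a < ⨆ i, f i) : ∃ i, a < f i := by
  by_contra! hf
  exact (Real.iSup_le hf ha).not_gt h

lemma measure_lt_iSup_abs_sub_emp_le {Ω 𝒳 : Type*} [MeasurableSpace Ω] {μ : Measure Ω}
    [Countable 𝒳] [DecidableEq 𝒳] [MeasurableSpace 𝒳] [MeasurableSingletonClass 𝒳]
    {p : 𝒳 → ℝ} (hp0 : ∀ u, 0 ≤ p u) (hp1 : ∀ u, p u ≤ 1) (hp : Summable p) {n : ℕ}
    (hn : n ≠ 0) {X : Fin n → Ω → 𝒳} (hmeas : ∀ i, Measurable (X i)) (hX : iIndepFun X μ)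
    (hμX : ∀ i u, μ {ω | X i ω = u} = ENNReal.ofReal (p u)) {m d : ℕ} (hm : Even m)
    {c : ℕ → ℝ} (hc : MomentIdentity n m d c) {t : ℝ} (ht : 0 < t) :
    μ {ω | t < ⨆ u, |p u - emp X ω u|} ≤
      ENNReal.ofReal ((∑' u, ∑ k ∈ Icc 1 d, c k * (p u * (1 - p u)) ^ k) / (n * t) ^ m) := by
  set M : 𝒳 → ℝ := fun u => ∑ k ∈ Icc 1 d, c k * (p u * (1 - p u)) ^ k
  have hM_eq (u : 𝒳) : ∑ y ∈ range (n + 1), n.choose y * p u ^ y * (1 - p u) ^ (n - y) *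
      ((y : ℝ) - n * p u) ^ m = M u := hc (p u) ⟨hp0 u, hp1 u⟩
  have hterm_nonneg (u : 𝒳) : 0 ≤ M u / (n * t) ^ m :=
    div_nonneg (hc.sum_nonneg hm ⟨hp0 u, hp1 u⟩) (by positivity)
  have hsub : {ω | t < ⨆ u, |p u - emp X ω u|} ⊆ ⋃ u, {ω | t < |p u - emp X ω u|} :=
    fun ω hω => Set.mem_iUnion.2 (exists_lt_of_nonneg_lt_iSup ht.le hω)
  calc μ _ ≤ ∑' u, μ {ω | t < |p u - emp X ω u|} :=
        (measure_mono hsub).trans (measure_iUnion_le _)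
    _ ≤ ∑' u, ENNReal.ofReal (M u / (n * t) ^ m) := ENNReal.tsum_le_tsum fun u =>
        hM_eq u ▸ measure_lt_abs_sub_emp_le hmeas hX hn u (hp0 u) (hp1 u) (hμX · u) hm ht
    _ = _ := by
        rw [← ENNReal.ofReal_tsum_of_nonneg hterm_nonneg
          ((summable_sum_Icc_one_mul_pow hp0 hp1 hp c d).div_const _), tsum_div_const]

lemma ENNReal.le_ofReal_of_forall_Ioo {x : ENNReal} {f : ℝ → ℝ} {a b : ℝ} (hba : b < a)
    (hf : ContinuousWithinAt f (Set.Iio a) a)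
    (h : ∀ t ∈ Set.Ioo b a, x ≤ ENNReal.ofReal (f t)) :
    x ≤ ENNReal.ofReal (f a) := by
  refine ge_of_tendsto ((ENNReal.continuous_ofReal.tendsto _).comp hf) ?_
  filter_upwards [Ioo_mem_nhdsLT hba] with t ht using h t ht

lemma summable_of_tsum_ne_zero {α : Type*} {f : α → ℝ} (hf : ∑' u, f u ≠ 0) : Summable f := by
  by_contra h
  exact hf (tsum_eq_zero_of_not_summable h)

theorem supNorm_markov_tail_bound_general
    {𝒳 : Type*} [Countable 𝒳] [DecidableEq 𝒳]
    [MeasurableSpace 𝒳] [MeasurableSingletonClass 𝒳]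
    {Ω : Type*} [MeasureSpace Ω] [IsProbabilityMeasure (ℙ : Measure Ω)]
    (p : 𝒳 → ℝ) (hp0 : ∀ u, 0 ≤ p u) (hp1 : ∑' u, p u = 1)
    (n : ℕ) (hn : 1 ≤ n)
    (X : Fin n → Ω → 𝒳) (hmeas : ∀ i, Measurable (X i))
    (hindep : iIndepFun X ℙ)
    (hdist : ∀ i u, (ℙ {ω | X i ω = u}).toReal = p u)
    (m : ℕ) (hm : Even m) (d : ℕ)
    (c : ℕ → ℝ) (hc : MomentIdentity n m d c)
    (a : ℝ) (ha : 0 < a) :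
    ℙ {ω | a ≤ ⨆ u, |p u - emp X ω u|} ≤
      ENNReal.ofReal ((1/((n:ℝ)*a)^m) *
        ∑' u, ∑ k ∈ Finset.Icc 1 d, c k * (p u * (1 - p u))^k) := by
  have hsumm : Summable p := summable_of_tsum_ne_zero (hp1 ▸ one_ne_zero)
  have hp_le_one (u : 𝒳) : p u ≤ 1 := hp1 ▸ hsumm.le_tsum u fun v _ => hp0 v
  have hμX (i : Fin n) (u : 𝒳) : ℙ {ω | X i ω = u} = ENNReal.ofReal (p u) := by
    rw [← hdist i u, ENNReal.ofReal_toReal (measure_ne_top _ _)]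
  rw [one_div_mul_eq_div]
  refine ENNReal.le_ofReal_of_forall_Ioo (f := fun t => _ / (n * t) ^ m) ha
    (by fun_prop (disch := positivity)) fun t ht => ?_
  exact (measure_mono fun ω hω => ht.2.trans_le hω).trans
    (measure_lt_iSup_abs_sub_emp_le hp0 hp_le_one hsumm (Nat.one_le_iff_ne_zero.1 hn) hmeas
      hindep hμX hm hc ht.1)

/-- **Markov-type tail bound for the sup-norm deviation.** For every `a > 0`,
`P( sup_u |p_u - p̂_u| ≥ a ) ≤ (na)^{-m} ∑_u ∑_{k=1}^{m/2} c_{k,m,n} (p_u(1-p_u))^k`. -/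
theorem supNorm_markov_tail_bound
    {𝒳 : Type*} [Countable 𝒳] [DecidableEq 𝒳]
    [MeasurableSpace 𝒳] [MeasurableSingletonClass 𝒳]
    {Ω : Type*} [MeasureSpace Ω] [IsProbabilityMeasure (ℙ : Measure Ω)]
    (p : 𝒳 → ℝ) (hp0 : ∀ u, 0 ≤ p u) (hp1 : ∑' u, p u = 1)
    (n : ℕ) (hn : 1 ≤ n)
    (X : Fin n → Ω → 𝒳) (hmeas : ∀ i, Measurable (X i))
    (hindep : iIndepFun X ℙ)
    (hdist : ∀ i u, (ℙ {ω | X i ω = u}).toReal = p u)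
    (m : ℕ) (hm : Even m) (hm0 : 0 < m) (d : ℕ) (hd : d = m / 2)
    (c : ℕ → ℝ) (hc : MomentIdentity n m d c)
    (a : ℝ) (ha : 0 < a) :
    ℙ {ω | a ≤ ⨆ u, |p u - emp X ω u|} ≤
      ENNReal.ofReal ((1/((n:ℝ)*a)^m) *
        ∑' u, ∑ k ∈ Finset.Icc 1 d, c k * (p u * (1 - p u))^k) :=
  supNorm_markov_tail_bound_general p hp0 hp1 n hn X hmeas hindep hdist m hm d c hc a ha
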